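/- Let V be a finite-dimensional vector space. The map J ↦ R_J := (4/3)Alt_τ(J^#) from acyclic Jacobi curvature operators to acyclic Riemann curvature operators and the map R ↦ J_R := Sym_τ(R^#) are mutually inverse linear isomorphisms. Here an acyclic Jacobi curvature operator is a symmetric T ∈ L(V,V;L(V;V)) with Cycl(T) = 0 and an acyclic Riemann curvature operator is an antisymmetric T with Cycl(T) = 0. -/
import Mathlib


/-- The Riemann curvature operator associated to a curvature operator:
`R_T(u,v)w = (2/3)(T(w,v)u − T(w,u)v)` (i.e. `(4/3)·Alt_τ(T^#)`). -/
noncomputable def toRiemann {V : Type*} [AddCommGroup V] [Module ℝ V]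
    (T : V → V → V → V) : V → V → V → V :=
  fun u v w => ((2 : ℝ) / 3) • (T w v u - T w u v)

/-- The Jacobi curvature operator associated to a curvature operator:
`J_T(u,v)w = (1/2)(T(w,v)u + T(w,u)v)` (i.e. `Sym_τ(T^#)`). -/
noncomputable def toJacobi {V : Type*} [AddCommGroup V] [Module ℝ V]
    (T : V → V → V → V) : V → V → V → V :=
  fun u v w => ((1 : ℝ) / 2) • (T w v u + T w u v)

/-- The maps `J ↦ R_J = (4/3)Alt_τ(J^#)` and `R ↦ J_R = Sym_τ(R^#)` are mutually
inverse linear isomorphisms between the space of acyclic Jacobi curvature operators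
(symmetric, with vanishing cyclic sum) and the space of acyclic Riemann curvature
operators (antisymmetric, with vanishing cyclic sum) on a finite-dimensional vector
space `V`. -/
theorem jacobi_riemann_duality
    {V : Type*} [AddCommGroup V] [Module ℝ V] [FiniteDimensional ℝ V] :
    (∀ J : V →ₗ[ℝ] V →ₗ[ℝ] V →ₗ[ℝ] V,
      (∀ u v : V, J u v = J v u) →
      (∀ u v w : V, J u v w + J v w u + J w u v = 0) →
      (∀ u v w : V,
          toRiemann (fun a b c => J a b c) u v w
            = -toRiemann (fun a b c => J a b c) v u w) ∧
      (∀ u v w : V,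
          toRiemann (fun a b c => J a b c) u v w
            + toRiemann (fun a b c => J a b c) v w u
            + toRiemann (fun a b c => J a b c) w u v = 0) ∧
      (∀ u v w : V,
          toJacobi (toRiemann (fun a b c => J a b c)) u v w = J u v w)) ∧
    (∀ R : V →ₗ[ℝ] V →ₗ[ℝ] V →ₗ[ℝ] V,
      (∀ u v : V, R u v = -R v u) →
      (∀ u v w : V, R u v w + R v w u + R w u v = 0) →
      (∀ u v w : V,
          toJacobi (fun a b c => R a b c) u v w
            = toJacobi (fun a b c => R a b c) v u w) ∧
      (∀ u v w : V,
          toJacobi (fun a b c => R a b c) u v w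
            + toJacobi (fun a b c => R a b c) v w u
            + toJacobi (fun a b c => R a b c) w u v = 0) ∧
      (∀ u v w : V,
          toRiemann (toJacobi (fun a b c => R a b c)) u v w = R u v w)) := by
  constructor
  · intro J hsym hcyc
    have hs : ∀ u v w : V, J u v w = J v u w := fun u v w =>
      LinearMap.congr_fun (hsym u v) w
    refine ⟨fun u v w => ?_, fun u v w => ?_, fun u v w => ?_⟩
    · simp only [toRiemann]
      module
    · simp only [toRiemann]
      linear_combination (norm := module)
        ((2:ℝ)/3) • hs w v u + ((2:ℝ)/3) • hs u w v + ((2:ℝ)/3) • hs v u w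
    · simp only [toRiemann, toJacobi]
      linear_combination (norm := module)
        ((1:ℝ)/3) • hs v u w - ((1:ℝ)/3) • hs u w v - ((1:ℝ)/3) • hcyc u v w
  · intro R hanti hcyc
    have ha : ∀ u v w : V, R u v w = -R v u w := fun u v w => by
      rw [hanti u v]; simp
    refine ⟨fun u v w => ?_, fun u v w => ?_, fun u v w => ?_⟩
    · simp only [toJacobi]
      module
    · simp only [toJacobi]
      linear_combination (norm := module)
        ((1:ℝ)/2) • hcyc u v w + ((1:ℝ)/2) • hcyc v u w
    · simp only [toRiemann, toJacobi]
      linear_combination (norm := module)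
        ((1:ℝ)/3) • ha u w v - ((1:ℝ)/3) • ha v u w - ((1:ℝ)/3) • hcyc u v w
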